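/- Let Λ be a ring and 𝒴 a full subcategory of finitely generated Λ-modules closed under extensions. Suppose 0 → C₁ → Y → C₀ → 0 is a short exact sequence with Y ∈ 𝒴, and 0 → Y₀ → X → C₀ → 0 is a short exact sequence with Y₀ ∈ 𝒴. Then there exists a short exact sequence 0 → C₁ → Y₁ → X → 0 with Y₁ ∈ 𝒴. -/

import Mathlib

open CategoryTheory

noncomputable section
set_option maxHeartbeats 1600000
set_option synthInstance.maxHeartbeats 400000

/-- `0 → A → B → C → 0` is a short exact sequence of modules. -/
def IsSES {R : Type} [Ring R] {A B C : ModuleCat.{0} R} (i : A ⟶ B) (p : B ⟶ C) : Prop :=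
  Function.Injective i ∧ Function.Exact i p ∧ Function.Surjective p

/-!
Take `Y₁ := Y ×_{C₀} X`. Projecting to `X` is surjective because `g` is, with kernel `C₁`
because `C₁ = ker g`; projecting to `Y` is surjective because `g'` is, with kernel
`Y₀ = ker g'`. So `Y₁` is an extension of `Y` by `Y₀`, hence lies in `𝒴` and is finitely
generated.
-/

namespace LinearMap

variable {R K M P N : Type*} [Ring R] [AddCommGroup K] [AddCommGroup M] [AddCommGroup P]
  [AddCommGroup N] [Module R K] [Module R M] [Module R P] [Module R N]
  (g : M →ₗ[R] N) (g' : P →ₗ[R] N)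

def pullback : Submodule R (M × P) :=
  eqLocus (g ∘ₗ fst R M P) (g' ∘ₗ snd R M P)

@[simp]
theorem mem_pullback {z : M × P} : z ∈ pullback g g' ↔ g z.1 = g' z.2 := Iff.rfl

def pullbackFst : pullback g g' →ₗ[R] M := fst R M P ∘ₗ (pullback g g').subtype

def pullbackSnd : pullback g g' →ₗ[R] P := snd R M P ∘ₗ (pullback g g').subtype

theorem pullbackFst_surjective (hg' : Function.Surjective g') :
    Function.Surjective (pullbackFst g g') := fun m ↦
  let ⟨p, hp⟩ := hg' (g m)
  ⟨⟨(m, p), hp.symm⟩, rfl⟩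

theorem pullbackSnd_surjective (hg : Function.Surjective g) :
    Function.Surjective (pullbackSnd g g') := fun p ↦
  let ⟨m, hm⟩ := hg (g' p)
  ⟨⟨(m, p), hm⟩, rfl⟩

variable {g g'}

def pullbackInl (f : K →ₗ[R] M) (hfg : g ∘ₗ f = 0) : K →ₗ[R] pullback g g' :=
  codRestrict _ (inl R M P ∘ₗ f) fun k ↦ by simpa using congr($hfg k)

def pullbackInr (f' : K →ₗ[R] P) (hfg' : g' ∘ₗ f' = 0) : K →ₗ[R] pullback g g' :=
  codRestrict _ (inr R M P ∘ₗ f') fun k ↦ by simpa using congr($hfg' k).symm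

theorem pullbackInl_injective {f : K →ₗ[R] M} (hfg : g ∘ₗ f = 0) (hf : Function.Injective f) :
    Function.Injective (pullbackInl (g' := g') f hfg) := fun _ _ h ↦
  hf congr(($h).1.1)

theorem pullbackInr_injective {f' : K →ₗ[R] P} (hfg' : g' ∘ₗ f' = 0)
    (hf' : Function.Injective f') : Function.Injective (pullbackInr (g := g) f' hfg') :=
  fun _ _ h ↦ hf' congr(($h).1.2)

theorem exact_pullbackInl_pullbackSnd {f : K →ₗ[R] M} (hfg : Function.Exact f g) :
    Function.Exact (pullbackInl (g' := g') f hfg.linearMap_comp_eq_zero) (pullbackSnd g g') := by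
  rintro ⟨⟨m, p⟩, hmp⟩
  constructor
  · rintro (rfl : p = 0)
    obtain ⟨k, rfl⟩ := (hfg m).1 (by simpa using hmp)
    exact ⟨k, rfl⟩
  · rintro ⟨k, hk⟩
    rw [← hk]
    rfl

theorem exact_pullbackInr_pullbackFst {f' : K →ₗ[R] P} (hfg' : Function.Exact f' g') :
    Function.Exact (pullbackInr (g := g) f' hfg'.linearMap_comp_eq_zero) (pullbackFst g g') := by
  rintro ⟨⟨m, p⟩, hmp⟩
  constructor
  · rintro (rfl : m = 0)
    obtain ⟨k, rfl⟩ := (hfg' p).1 (by simpa using hmp.symm)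
    exact ⟨k, rfl⟩
  · rintro ⟨k, hk⟩
    rw [← hk]
    rfl

end LinearMap

open LinearMap

theorem stmt0_general (Λ : Type) [Ring Λ] (𝒴 : Set (ModuleCat.{0} Λ))
    (hext : ∀ (A B C : ModuleCat.{0} Λ) (i : A ⟶ B) (p : B ⟶ C),
      IsSES i p → A ∈ 𝒴 → C ∈ 𝒴 → B ∈ 𝒴)
    (C₁ Y C₀ Y₀ X : ModuleCat.{0} Λ)
    [Module.Finite Λ Y]
    [Module.Finite Λ Y₀]
    (f : C₁ ⟶ Y) (g : Y ⟶ C₀) (hY : Y ∈ 𝒴) (h₁ : IsSES f g)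
    (f' : Y₀ ⟶ X) (g' : X ⟶ C₀) (hY₀ : Y₀ ∈ 𝒴) (h₂ : IsSES f' g') :
    ∃ (Y₁ : ModuleCat.{0} Λ) (u : C₁ ⟶ Y₁) (v : Y₁ ⟶ X),
      Module.Finite Λ Y₁ ∧ Y₁ ∈ 𝒴 ∧ IsSES u v := by
  obtain ⟨hf, hfg, hg⟩ := h₁
  obtain ⟨hf', hfg', hg'⟩ := h₂
  set Y₁ := pullback g.hom g'.hom
  have hexactY : Function.Exact (pullbackInr (g := g.hom) f'.hom hfg'.linearMap_comp_eq_zero)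
      (pullbackFst g.hom g'.hom) :=
    exact_pullbackInr_pullbackFst hfg'
  have hsurjY : Function.Surjective (pullbackFst g.hom g'.hom) := pullbackFst_surjective _ _ hg'
  have hY₁ : ModuleCat.of Λ Y₁ ∈ 𝒴 :=
    hext Y₀ _ Y (ModuleCat.ofHom _) (ModuleCat.ofHom _)
      ⟨pullbackInr_injective hfg'.linearMap_comp_eq_zero hf', hexactY, hsurjY⟩ hY₀ hY
  exact ⟨.of Λ Y₁, ModuleCat.ofHom (pullbackInl f.hom hfg.linearMap_comp_eq_zero),
    ModuleCat.ofHom (pullbackSnd g.hom g'.hom), .of_exact hexactY hsurjY, hY₁,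
    pullbackInl_injective hfg.linearMap_comp_eq_zero hf, exact_pullbackInl_pullbackSnd hfg,
    pullbackSnd_surjective _ _ hg⟩

/-- Lemma 2.1: given short exact sequences `0 \to C_1 \to Y \to C_0 \to 0` with
`Y \in \mathcal{Y}` and `0 \to Y_0 \to X \to C_0 \to 0` with `Y_0 \in \mathcal{Y}`, where
`\mathcal{Y}` is closed under extensions, there is a short exact sequence
`0 \to C_1 \to Y_1 \to X \to 0` with `Y_1 \in \mathcal{Y}`. -/
theorem stmt0 (Λ : Type) [Ring Λ] (𝒴 : Set (ModuleCat.{0} Λ))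
    (hext : ∀ (A B C : ModuleCat.{0} Λ) (i : A ⟶ B) (p : B ⟶ C),
      IsSES i p → A ∈ 𝒴 → C ∈ 𝒴 → B ∈ 𝒴)
    (C₁ Y C₀ Y₀ X : ModuleCat.{0} Λ)
    [Module.Finite Λ C₁] [Module.Finite Λ Y] [Module.Finite Λ C₀]
    [Module.Finite Λ Y₀] [Module.Finite Λ X]
    (f : C₁ ⟶ Y) (g : Y ⟶ C₀) (hY : Y ∈ 𝒴) (h₁ : IsSES f g)
    (f' : Y₀ ⟶ X) (g' : X ⟶ C₀) (hY₀ : Y₀ ∈ 𝒴) (h₂ : IsSES f' g') :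
    ∃ (Y₁ : ModuleCat.{0} Λ) (u : C₁ ⟶ Y₁) (v : Y₁ ⟶ X),
      Module.Finite Λ Y₁ ∧ Y₁ ∈ 𝒴 ∧ IsSES u v :=
  stmt0_general Λ 𝒴 hext C₁ Y C₀ Y₀ X f g hY h₁ f' g' hY₀ h₂
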